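/- arXiv:1807.08702 — 2 statements merged into one kernel-verified Lean document; each statement's English description precedes it below -/
import Mathlib

section
/- Let w : ℝ → ℝ be nonnegative and integrable, and define I_w(t) = ∫ cos(t·x)·w(x) dx. For real numbers a₁,…,aₙ and b₁,…,bₙ, the weighted L²-distance between the two empirical characteristic functions φ̂(t) = (1/n)∑ⱼ exp(i t aⱼ) and φ̂₀(t) = (1/n)∑ⱼ exp(i t bⱼ) satisfies n² ∫ |φ̂(t) − φ̂₀(t)|² w(t) dt = ∑_{j,s} I_w(aⱼ − a_s) + ∑_{j,s} I_w(bⱼ − b_s) − 2 ∑_{j,s} I_w(aⱼ − b_s). -/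
/-!
Expanding `|φ̂ - φ̂₀|² = |φ̂|² + |φ̂₀|² - 2 Re (φ̂ · conj φ̂₀)` and multiplying out the sums, each
product `exp (i t x) · conj (exp (i t y))` has real part `cos ((x - y) t)`. Integrating against `w`
term by term, which is legitimate because `|cos| ≤ 1` and `w` is integrable, turns every cosine
into a value of `I_w`.
-/

open MeasureTheory Complex Finset
open scoped ComplexConjugate

lemma re_exp_mul_conj_exp (t x y : ℝ) :
    (exp (I * t * x) * conj (exp (I * t * y))).re = Real.cos ((x - y) * t) := by
  rw [← exp_conj, ← exp_add]
  have h : I * t * x + conj (I * t * y) = ((x - y) * t : ℝ) * I := by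
    simp only [map_mul, conj_I, conj_ofReal]
    push_cast
    ring
  rw [h, exp_ofReal_mul_I_re]

section FiniteSums

variable {ι : Type*} [Fintype ι]

lemma re_sum_exp_mul_conj_sum_exp (x y : ι → ℝ) (t : ℝ) :
    ((∑ j, exp (I * t * x j)) * conj (∑ s, exp (I * t * y s))).re
      = ∑ j, ∑ s, Real.cos ((x j - y s) * t) := by
  simp only [map_sum, sum_mul_sum, re_sum, re_exp_mul_conj_exp]

lemma norm_sum_exp_sub_sum_exp_sq (x y : ι → ℝ) (t : ℝ) :
    ‖∑ j, exp (I * t * x j) - ∑ j, exp (I * t * y j)‖ ^ 2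
      = (∑ j, ∑ s, Real.cos ((x j - x s) * t)) + (∑ j, ∑ s, Real.cos ((y j - y s) * t))
        - 2 * ∑ j, ∑ s, Real.cos ((x j - y s) * t) := by
  have normSq_eq (z : ℂ) : normSq z = (z * conj z).re := by rw [mul_conj, ofReal_re]
  rw [Complex.sq_norm, normSq_sub, normSq_eq, normSq_eq, re_sum_exp_mul_conj_sum_exp,
    re_sum_exp_mul_conj_sum_exp, re_sum_exp_mul_conj_sum_exp]

variable {w : ℝ → ℝ}

lemma MeasureTheory.Integrable.cos_mul_mul (hw : Integrable w) (c : ℝ) :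
    Integrable (fun t ↦ Real.cos (c * t) * w t) :=
  hw.bdd_mul (by fun_prop) (c := 1)
    (.of_forall fun t ↦ by simpa using Real.abs_cos_le_one (c * t))

lemma MeasureTheory.Integrable.sum_sum_cos_mul (hw : Integrable w) (x y : ι → ℝ) :
    Integrable (fun t ↦ (∑ j, ∑ s, Real.cos ((x j - y s) * t)) * w t) := by
  simp only [sum_mul]
  exact integrable_finsetSum _ fun j _ ↦ integrable_finsetSum _ fun s _ ↦ hw.cos_mul_mul _

lemma integral_sum_sum_cos_mul (hw : Integrable w) (x y : ι → ℝ) :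
    ∫ t, (∑ j, ∑ s, Real.cos ((x j - y s) * t)) * w t
      = ∑ j, ∑ s, ∫ t, Real.cos ((x j - y s) * t) * w t := by
  simp only [sum_mul]
  rw [integral_finsetSum _ fun j _ ↦ integrable_finsetSum _ fun s _ ↦ hw.cos_mul_mul _]
  exact sum_congr rfl fun j _ ↦ integral_finsetSum _ fun s _ ↦ hw.cos_mul_mul _

lemma integral_norm_sum_exp_sub_sum_exp_sq_mul (hw : Integrable w) (x y : ι → ℝ) :
    ∫ t : ℝ, ‖∑ j, exp (I * t * x j) - ∑ j, exp (I * t * y j)‖ ^ 2 * w t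
      = (∑ j, ∑ s, ∫ t, Real.cos ((x j - x s) * t) * w t)
        + (∑ j, ∑ s, ∫ t, Real.cos ((y j - y s) * t) * w t)
        - 2 * ∑ j, ∑ s, ∫ t, Real.cos ((x j - y s) * t) * w t := by
  simp_rw [norm_sum_exp_sub_sum_exp_sq, sub_mul _ _ (w _), add_mul _ _ (w _), mul_assoc (2 : ℝ)]
  rw [integral_sub, integral_add, integral_const_mul, integral_sum_sum_cos_mul hw,
    integral_sum_sum_cos_mul hw, integral_sum_sum_cos_mul hw]
  · exact hw.sum_sum_cos_mul x x
  · exact hw.sum_sum_cos_mul y y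
  · exact (hw.sum_sum_cos_mul x x).add (hw.sum_sum_cos_mul y y)
  · exact (hw.sum_sum_cos_mul x y).const_mul 2

end FiniteSums

theorem ecf_L2_distance_expansion_general (n : ℕ) (hn : 0 < n)
    (w : ℝ → ℝ) (hw_int : Integrable w)
    (a b : Fin n → ℝ)
    (Iw : ℝ → ℝ) (hIw : ∀ t, Iw t = ∫ x, Real.cos (t * x) * w x) :
    (n : ℝ) ^ 2 *
      ∫ t : ℝ, ‖(1 / (n : ℂ)) * ∑ j, Complex.exp (Complex.I * (t : ℂ) * (a j : ℂ))
            - (1 / (n : ℂ)) * ∑ j, Complex.exp (Complex.I * (t : ℂ) * (b j : ℂ))‖ ^ 2 * w t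
    = (∑ j, ∑ s, Iw (a j - a s)) + (∑ j, ∑ s, Iw (b j - b s))
        - 2 * ∑ j, ∑ s, Iw (a j - b s) := by
  have scale (t : ℝ) :
      ‖(1 / (n : ℂ)) * ∑ j, exp (I * t * a j) - (1 / (n : ℂ)) * ∑ j, exp (I * t * b j)‖ ^ 2
          * w t
        = ((n : ℝ) ^ 2)⁻¹ * (‖∑ j, exp (I * t * a j) - ∑ j, exp (I * t * b j)‖ ^ 2 * w t) := by
    rw [← mul_sub, norm_mul, mul_pow, norm_div, norm_one, norm_natCast]
    ring
  simp only [scale, hIw]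
  rw [integral_const_mul, integral_norm_sum_exp_sub_sum_exp_sq_mul hw_int,
    mul_inv_cancel_left₀ (by positivity)]

/-- The quadratic expansion of the weighted L²-distance between two
empirical characteristic functions (Remark 1). -/
theorem ecf_L2_distance_expansion (n : ℕ) (hn : 0 < n)
    (w : ℝ → ℝ) (hw_nonneg : ∀ t, 0 ≤ w t) (hw_int : Integrable w)
    (a b : Fin n → ℝ)
    (Iw : ℝ → ℝ) (hIw : ∀ t, Iw t = ∫ x, Real.cos (t * x) * w x) :
    (n : ℝ) ^ 2 *
      ∫ t : ℝ, ‖(1 / (n : ℂ)) * ∑ j, Complex.exp (Complex.I * (t : ℂ) * (a j : ℂ))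
            - (1 / (n : ℂ)) * ∑ j, Complex.exp (Complex.I * (t : ℂ) * (b j : ℂ))‖ ^ 2 * w t
    = (∑ j, ∑ s, Iw (a j - a s)) + (∑ j, ∑ s, Iw (b j - b s))
        - 2 * ∑ j, ∑ s, Iw (a j - b s) :=
  ecf_L2_distance_expansion_general n hn w hw_int a b Iw hIw
end

section
/- Let X be a random variable with values in a set R, let ε be independent of X with E ε² = 1 and E ε⁴ < ∞, and let σ : R → (0,∞) be bounded measurable with E σ(X)⁴ < ∞. Define ε₀ = σ(X)ε/σ₀(X) for a bounded measurable σ₀ : R → (0,∞) bounded away from 0. If ε and ε₀ have the same distribution, then E[(σ(X)/σ₀(X))²] = 1 and E[(σ(X)/σ₀(X))⁴] · E ε⁴ = E ε⁴; hence if E ε⁴ > 0 and E(ε⁴) > (E ε²)² (i.e. ε² is non-degenerate), then E[(σ(X)/σ₀(X))⁴] = 1, and combined with E[(σ(X)/σ₀(X))²] = 1 and Jensen's inequality (equality case), σ(X)/σ₀(X) = 1 almost surely. -/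
/-!
Write `W = σ(X) / σ₀(X)`, so that `ε₀ = W ε` with `W` independent of `ε`. Equality in law
of `ε` and `W ε` gives `E W^k · E ε^k = E ε^k` for every `k`. Taking `k = 2` and (when
`E ε⁴ > 0`) `k = 4` yields `E W² = E W⁴ = 1`, so `W²` has mean `1` and variance `0`:
`W² = 1` a.s., and `W = 1` a.s. because `W > 0`.
-/

open MeasureTheory ProbabilityTheory

namespace ProbabilityTheory

variable {Ω : Type*} [MeasurableSpace Ω] {μ : Measure Ω}

lemma IndepFun.integral_mul_pow {W Y : Ω → ℝ} (hWY : IndepFun W Y μ)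
    (hW : AEMeasurable W μ) (hY : AEMeasurable Y μ) (k : ℕ) :
    ∫ ω, (W ω * Y ω) ^ k ∂μ = (∫ ω, W ω ^ k ∂μ) * ∫ ω, Y ω ^ k ∂μ := by
  simp_rw [mul_pow]
  have hind := hWY.comp (measurable_id.pow_const k) (measurable_id.pow_const k)
  exact hind.integral_fun_mul_eq_mul_integral (hW.pow_const k).aestronglyMeasurable
    (hY.pow_const k).aestronglyMeasurable

lemma IndepFun.integral_pow_mul_integral_pow_eq_of_identDistrib_mul {W Y : Ω → ℝ}
    (hWY : IndepFun W Y μ) (hW : AEMeasurable W μ)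
    (hid : IdentDistrib Y (fun ω => W ω * Y ω) μ μ) (k : ℕ) :
    (∫ ω, W ω ^ k ∂μ) * ∫ ω, Y ω ^ k ∂μ = ∫ ω, Y ω ^ k ∂μ := by
  rw [← hWY.integral_mul_pow hW hid.aemeasurable_fst k]
  exact (hid.comp (measurable_id.pow_const k)).integral_eq.symm

lemma ae_eq_one_of_integral_eq_one_of_integral_sq_eq_one [IsProbabilityMeasure μ]
    {W : Ω → ℝ} (hW : AEStronglyMeasurable W μ) (h1 : ∫ ω, W ω ∂μ = 1)
    (h2 : ∫ ω, W ω ^ 2 ∂μ = 1) :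
    ∀ᵐ ω ∂μ, W ω = 1 := by
  have hW2 : MemLp W 2 μ :=
    (memLp_two_iff_integrable_sq hW).2 (.of_integral_ne_zero (by simp [h2]))
  have hvar : variance W μ = 0 := by
    rw [variance_eq_sub hW2]
    simp [h1, h2]
  simpa [h1] using ae_eq_integral_of_variance_eq_zero hW2 hvar

end ProbabilityTheory

theorem variance_ratio_degenerate_general
    {Ωs : Type*} [MeasurableSpace Ωs] (μ : Measure Ωs) [IsProbabilityMeasure μ]
    (R : Set ℝ) (X : Ωs → ℝ) (hX : Measurable X) (hXR : ∀ ω, X ω ∈ R)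
    (ε : Ωs → ℝ) (hε : Measurable ε) (hindep : IndepFun ε X μ)
    (hε2 : ∫ ω, (ε ω) ^ 2 ∂μ = 1)
    (σ σ₀ : ℝ → ℝ) (hσ_meas : Measurable σ) (hσ₀_meas : Measurable σ₀)
    (hσ_pos : ∀ x ∈ R, 0 < σ x)
    (c : ℝ) (hc : 0 < c) (hσ₀_lb : ∀ x ∈ R, c ≤ σ₀ x)
    (ε₀ : Ωs → ℝ) (hε₀ : ∀ ω, ε₀ ω = σ (X ω) * ε ω / σ₀ (X ω))
    (hdist : Measure.map ε μ = Measure.map ε₀ μ) :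
    (∫ ω, (σ (X ω) / σ₀ (X ω)) ^ 2 ∂μ = 1)
    ∧ ((∫ ω, (σ (X ω) / σ₀ (X ω)) ^ 4 ∂μ) * (∫ ω, (ε ω) ^ 4 ∂μ)
        = ∫ ω, (ε ω) ^ 4 ∂μ)
    ∧ (0 < ∫ ω, (ε ω) ^ 4 ∂μ →
        (∫ ω, (ε ω) ^ 2 ∂μ) ^ 2 < ∫ ω, (ε ω) ^ 4 ∂μ →
        (∫ ω, (σ (X ω) / σ₀ (X ω)) ^ 4 ∂μ = 1)
        ∧ (∀ᵐ ω ∂μ, σ (X ω) / σ₀ (X ω) = 1)) := by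
  set W : Ωs → ℝ := fun ω => σ (X ω) / σ₀ (X ω)
  have hW_pos : ∀ ω, 0 < W ω := fun ω =>
    div_pos (hσ_pos _ (hXR ω)) (hc.trans_le (hσ₀_lb _ (hXR ω)))
  have hW_meas : Measurable W := (hσ_meas.comp hX).div (hσ₀_meas.comp hX)
  have hWε : IndepFun W ε μ := hindep.symm.comp (hσ_meas.div hσ₀_meas) measurable_id
  have hε₀_eq : ε₀ = fun ω => W ω * ε ω := funext fun ω => by rw [hε₀, mul_div_right_comm]
  have hid : IdentDistrib ε (fun ω => W ω * ε ω) μ μ :=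
    ⟨hε.aemeasurable, (hW_meas.mul hε).aemeasurable, hε₀_eq ▸ hdist⟩
  have moment :=
    hWε.integral_pow_mul_integral_pow_eq_of_identDistrib_mul hW_meas.aemeasurable hid
  have h2 : ∫ ω, W ω ^ 2 ∂μ = 1 := by simpa [hε2] using moment 2
  refine ⟨h2, moment 4, fun hε4_pos _ => ?_⟩
  have h4 : ∫ ω, W ω ^ 4 ∂μ = 1 :=
    mul_right_cancel₀ hε4_pos.ne' ((moment 4).trans (one_mul _).symm)
  refine ⟨h4, ?_⟩
  have hsq : ∀ᵐ ω ∂μ, W ω ^ 2 = 1 :=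
    ae_eq_one_of_integral_eq_one_of_integral_sq_eq_one
      (hW_meas.pow_const 2).aestronglyMeasurable h2 (by simpa only [← pow_mul] using h4)
  filter_upwards [hsq] with ω hω
  exact (pow_eq_one_iff_of_nonneg (hW_pos ω).le two_ne_zero).1 hω

/-- Moment identities from equality in distribution of the error and the null
error, and the resulting degeneracy of the variance ratio (equality case in
Jensen/Cauchy–Schwarz). -/
theorem variance_ratio_degenerate
    {Ωs : Type*} [MeasurableSpace Ωs] (μ : Measure Ωs) [IsProbabilityMeasure μ]
    (R : Set ℝ) (X : Ωs → ℝ) (hX : Measurable X) (hXR : ∀ ω, X ω ∈ R)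
    (ε : Ωs → ℝ) (hε : Measurable ε) (hindep : IndepFun ε X μ)
    (hε2 : ∫ ω, (ε ω) ^ 2 ∂μ = 1) (hε4_int : Integrable (fun ω => (ε ω) ^ 4) μ)
    (σ σ₀ : ℝ → ℝ) (hσ_meas : Measurable σ) (hσ₀_meas : Measurable σ₀)
    (hσ_pos : ∀ x ∈ R, 0 < σ x) (hσ_bdd : ∃ M, ∀ x ∈ R, σ x ≤ M)
    (hσ4_int : Integrable (fun ω => (σ (X ω)) ^ 4) μ)
    (c : ℝ) (hc : 0 < c) (hσ₀_lb : ∀ x ∈ R, c ≤ σ₀ x)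
    (hσ₀_bdd : ∃ M, ∀ x ∈ R, σ₀ x ≤ M)
    (ε₀ : Ωs → ℝ) (hε₀ : ∀ ω, ε₀ ω = σ (X ω) * ε ω / σ₀ (X ω))
    (hdist : Measure.map ε μ = Measure.map ε₀ μ) :
    (∫ ω, (σ (X ω) / σ₀ (X ω)) ^ 2 ∂μ = 1)
    ∧ ((∫ ω, (σ (X ω) / σ₀ (X ω)) ^ 4 ∂μ) * (∫ ω, (ε ω) ^ 4 ∂μ)
        = ∫ ω, (ε ω) ^ 4 ∂μ)
    ∧ (0 < ∫ ω, (ε ω) ^ 4 ∂μ →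
        (∫ ω, (ε ω) ^ 2 ∂μ) ^ 2 < ∫ ω, (ε ω) ^ 4 ∂μ →
        (∫ ω, (σ (X ω) / σ₀ (X ω)) ^ 4 ∂μ = 1)
        ∧ (∀ᵐ ω ∂μ, σ (X ω) / σ₀ (X ω) = 1)) :=
  variance_ratio_degenerate_general μ R X hX hXR ε hε hindep hε2 σ σ₀ hσ_meas hσ₀_meas hσ_pos c hc
    hσ₀_lb ε₀ hε₀ hdist
end
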